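/- arXiv:1106.2295 — 5 statements merged into one kernel-verified Lean document; each statement's English description precedes it below -/
import Mathlib

section
/- Let L be an m×t matrix in the class L_r and U a t×n matrix in the class U_c, where r = {r_1 < ... < r_t} and c = {c_1 < ... < c_t}. Then the product A = LU is an m×n matrix belonging to the class M_{r,c}; in particular rank(LU) = t and [r_1,...,r_s | c_1,...,c_s]_{LU} = [r_1,...,r_s | 1,...,s]_L · [1,...,s | c_1,...,c_s]_U ≠ 0 for every s ≤ t. -/
open Matrix

/-- A real matrix is totally nonnegative if every minor is nonnegative. -/
def TotNonneg {m n : ℕ} (A : Matrix (Fin m) (Fin n) ℝ) : Prop :=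
  ∀ (s : ℕ) (f : Fin s → Fin m) (g : Fin s → Fin n),
    StrictMono f → StrictMono g → 0 ≤ (A.submatrix f g).det

/-- The class `M_{r,c}`. -/
def InM {F : Type} [Field F] {m n t : ℕ} (A : Matrix (Fin m) (Fin n) F)
    (r : Fin t → Fin m) (c : Fin t → Fin n) : Prop :=
  A.rank = t ∧
  (∀ (s : ℕ) (hs : s ≤ t),
    (A.submatrix (fun k => r (Fin.castLE hs k)) (fun k => c (Fin.castLE hs k))).det ≠ 0) ∧
  (∀ (s : ℕ) (hs : s ≤ t) (f : Fin s → Fin m) (g : Fin s → Fin n),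
    StrictMono f → StrictMono g →
    (¬ (∀ k, r (Fin.castLE hs k) ≤ f k) ∨ ¬ (∀ k, c (Fin.castLE hs k) ≤ g k)) →
    (A.submatrix f g).det = 0)

/-- The class `L_r`. -/
def InL {F : Type} [Field F] {m t : ℕ} (L : Matrix (Fin m) (Fin t) F)
    (r : Fin t → Fin m) : Prop :=
  ∀ j, L (r j) j ≠ 0 ∧ ∀ i, i < r j → L i j = 0

/-- The class `L_r^*`. -/
def InLstar {F : Type} [Field F] {m t : ℕ} (L : Matrix (Fin m) (Fin t) F)
    (r : Fin t → Fin m) : Prop :=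
  ∀ j, L (r j) j = 1 ∧ ∀ i, i < r j → L i j = 0

/-- The class `U_c`. -/
def InU {F : Type} [Field F] {t n : ℕ} (U : Matrix (Fin t) (Fin n) F)
    (c : Fin t → Fin n) : Prop :=
  ∀ i, U i (c i) ≠ 0 ∧ ∀ j, j < c i → U i j = 0


lemma sum_trunc {M : Type*} [AddCommMonoid M] {a b : ℕ} (h : a ≤ b) (f : Fin b → M)
    (hf : ∀ i : Fin b, a ≤ (i : ℕ) → f i = 0) :
    ∑ i, f i = ∑ i : Fin a, f (Fin.castLE h i) := by
  classical
  have key : ∀ (N : ℕ) (g : Fin N → M),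
      ∑ i, g i = ∑ j ∈ Finset.range N, if hj : j < N then g ⟨j, hj⟩ else 0 := by
    intro N g
    rw [← Fin.sum_univ_eq_sum_range (fun j => if hj : j < N then g ⟨j, hj⟩ else 0) N]
    exact Finset.sum_congr rfl fun i _ => by simp [i.2]
  rw [key b f, key a (fun i => f (Fin.castLE h i))]
  rw [← Finset.sum_subset (Finset.range_subset_range.mpr h)]
  · refine Finset.sum_congr rfl fun j hj => ?_
    have hja : j < a := Finset.mem_range.mp hj
    have hjb : j < b := lt_of_lt_of_le hja h
    rw [dif_pos hjb, dif_pos hja]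
    rfl
  · intro j hj hja
    have hjb : j < b := Finset.mem_range.mp hj
    rw [dif_pos hjb]
    exact hf ⟨j, hjb⟩ (le_of_not_gt fun hc => hja (Finset.mem_range.mpr hc))

lemma key_det_zero {F : Type} [Field F] {m n t s : ℕ}
    (L : Matrix (Fin m) (Fin t) F) (U : Matrix (Fin t) (Fin n) F)
    (f : Fin s → Fin m) (g : Fin s → Fin n) (k : Fin s) (hkt : (k : ℕ) < t)
    (hz : ∀ i : Fin s, ∀ p : Fin t, i ≤ k → (k : ℕ) ≤ (p : ℕ) → L (f i) p = 0) :
    ((L * U).submatrix f g).det = 0 := by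
  classical
  set K := (k : ℕ) + 1 with hKdef
  have hK : K ≤ s := k.2
  set N : Matrix (Fin K) (Fin K) F :=
    fun i p => if hp : (p : ℕ) < (k : ℕ) then L (f (Fin.castLE hK i)) ⟨p, hp.trans hkt⟩ else 0
    with hN
  have detN : N.det = 0 := by
    apply Matrix.det_eq_zero_of_column_eq_zero ⟨(k : ℕ), Nat.lt_succ_self _⟩
    intro i
    exact dif_neg (lt_irrefl _)
  obtain ⟨u, hu0, huN⟩ := Matrix.exists_vecMul_eq_zero_iff.mpr detN
  set v : Fin s → F := fun j => if hj : (j : ℕ) < K then u ⟨j, hj⟩ else 0 with hv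
  have hv0 : v ≠ 0 := by
    obtain ⟨i, hi⟩ := Function.ne_iff.mp hu0
    apply Function.ne_iff.mpr
    refine ⟨Fin.castLE hK i, ?_⟩
    simpa [hv, i.2] using hi
  have hvM : v ᵥ* ((L * U).submatrix f g) = 0 := by
    funext j
    have : (v ᵥ* ((L * U).submatrix f g)) j = ∑ i, v i * (L * U) (f i) (g j) := by
      simp [Matrix.vecMul, dotProduct]
    rw [this]
    rw [sum_trunc hK (fun i => v i * (L * U) (f i) (g j))
      (fun i hi => by simp [hv, Nat.not_lt.mpr hi])]
    have hvu : ∀ i : Fin K, v (Fin.castLE hK i) = u i := by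
      intro i; simp [hv, i.2]
    calc ∑ i : Fin K, v (Fin.castLE hK i) * (L * U) (f (Fin.castLE hK i)) (g j)
        = ∑ i : Fin K, ∑ p : Fin t, u i * (L (f (Fin.castLE hK i)) p * U p (g j)) := by
          refine Finset.sum_congr rfl fun i _ => ?_
          rw [hvu, Matrix.mul_apply, Finset.mul_sum]
      _ = ∑ p : Fin t, (∑ i : Fin K, u i * L (f (Fin.castLE hK i)) p) * U p (g j) := by
          rw [Finset.sum_comm]
          refine Finset.sum_congr rfl fun p _ => ?_
          rw [Finset.sum_mul]
          exact Finset.sum_congr rfl fun i _ => by ring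
      _ = 0 := by
          apply Finset.sum_eq_zero
          intro p _
          rcases lt_or_ge (p : ℕ) (k : ℕ) with hp | hp
          · have hpK : (p : ℕ) < K := hp.trans (Nat.lt_succ_self _)
            have : ∑ i : Fin K, u i * L (f (Fin.castLE hK i)) p
                = (u ᵥ* N) ⟨(p : ℕ), hpK⟩ := by
              simp only [Matrix.vecMul, dotProduct, hN]
              refine Finset.sum_congr rfl fun i _ => ?_
              rw [dif_pos hp]
            rw [this, huN]
            simp
          · have : ∀ i : Fin K, u i * L (f (Fin.castLE hK i)) p = 0 := by
              intro i
              rw [hz (Fin.castLE hK i) p (by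
                have := i.2
                exact Fin.le_def.mpr (Nat.lt_succ_iff.mp this)) hp, mul_zero]
            rw [Finset.sum_eq_zero fun i _ => this i, zero_mul]
  exact Matrix.exists_vecMul_eq_zero_iff.mp ⟨v, hv0, hvM⟩

lemma factor_lemma {F : Type} [Field F] {m n t : ℕ}
    (L : Matrix (Fin m) (Fin t) F) (U : Matrix (Fin t) (Fin n) F)
    (r : Fin t → Fin m) (hr : StrictMono r) (hL : InL L r)
    {s : ℕ} (hs : s ≤ t) (g : Fin s → Fin n) :
    (L * U).submatrix (fun k => r (Fin.castLE hs k)) g =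
      (L.submatrix (fun k => r (Fin.castLE hs k)) (Fin.castLE hs)) *
      (U.submatrix (Fin.castLE hs) g) := by
  ext i j
  simp only [Matrix.submatrix_apply, Matrix.mul_apply]
  exact sum_trunc hs (fun p => L (r (Fin.castLE hs i)) p * U p (g j)) (fun p hp => by
    show L (r (Fin.castLE hs i)) p * U p (g j) = 0
    rw [(hL p).2 _ (hr (Fin.lt_def.mpr (lt_of_lt_of_le i.2 hp))), zero_mul])

lemma detL_ne {F : Type} [Field F] {m t : ℕ}
    (L : Matrix (Fin m) (Fin t) F) (r : Fin t → Fin m) (hr : StrictMono r) (hL : InL L r)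
    {s : ℕ} (hs : s ≤ t) :
    (L.submatrix (fun k => r (Fin.castLE hs k)) (Fin.castLE hs)).det ≠ 0 := by
  rw [Matrix.det_of_lowerTriangular _ (fun i j (hij : i < j) => by
    exact (hL (Fin.castLE hs j)).2 _ (hr (by exact Fin.lt_def.mpr hij)))]
  exact Finset.prod_ne_zero_iff.mpr fun i _ => (hL (Fin.castLE hs i)).1

lemma detU_ne {F : Type} [Field F] {n t : ℕ}
    (U : Matrix (Fin t) (Fin n) F) (c : Fin t → Fin n) (hc : StrictMono c) (hU : InU U c)
    {s : ℕ} (hs : s ≤ t) :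
    (U.submatrix (Fin.castLE hs) (fun k => c (Fin.castLE hs k))).det ≠ 0 := by
  rw [Matrix.det_of_upperTriangular (fun i j (hij : (j:Fin s) < i) => by
    exact (hU (Fin.castLE hs i)).2 _ (hc (by exact Fin.lt_def.mpr hij)))]
  exact Finset.prod_ne_zero_iff.mpr fun i _ => (hU (Fin.castLE hs i)).1

theorem LU_in_class_M {F : Type} [Field F] {m n t : ℕ}
    (L : Matrix (Fin m) (Fin t) F) (U : Matrix (Fin t) (Fin n) F)
    (r : Fin t → Fin m) (c : Fin t → Fin n)
    (hr : StrictMono r) (hc : StrictMono c)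
    (hL : InL L r) (hU : InU U c) :
    InM (L * U) r c ∧ (L * U).rank = t ∧
    ∀ (s : ℕ) (hs : s ≤ t),
      ((L * U).submatrix (fun k => r (Fin.castLE hs k)) (fun k => c (Fin.castLE hs k))).det =
        (L.submatrix (fun k => r (Fin.castLE hs k)) (Fin.castLE hs)).det *
        (U.submatrix (Fin.castLE hs) (fun k => c (Fin.castLE hs k))).det ∧
      ((L * U).submatrix (fun k => r (Fin.castLE hs k)) (fun k => c (Fin.castLE hs k))).det ≠ 0 := by
  have hmin : ∀ (s : ℕ) (hs : s ≤ t),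
      ((L * U).submatrix (fun k => r (Fin.castLE hs k)) (fun k => c (Fin.castLE hs k))).det =
        (L.submatrix (fun k => r (Fin.castLE hs k)) (Fin.castLE hs)).det *
        (U.submatrix (Fin.castLE hs) (fun k => c (Fin.castLE hs k))).det := by
    intro s hs
    rw [factor_lemma L U r hr hL hs, Matrix.det_mul]
  have hminne : ∀ (s : ℕ) (hs : s ≤ t),
      ((L * U).submatrix (fun k => r (Fin.castLE hs k)) (fun k => c (Fin.castLE hs k))).det ≠ 0 := by
    intro s hs
    rw [hmin s hs]
    exact mul_ne_zero (detL_ne L r hr hL hs) (detU_ne U c hc hU hs)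
  have hrank : (L * U).rank = t := by
    have h1 : (L * U).rank ≤ t :=
      le_trans (Matrix.rank_mul_le_left L U) (Matrix.rank_le_width L)
    have hMt := hminne t le_rfl
    have hunit : IsUnit ((L * U).submatrix (fun k => r (Fin.castLE (le_refl t) k))
        (fun k => c (Fin.castLE (le_refl t) k))) :=
      (Matrix.isUnit_iff_isUnit_det _).mpr (isUnit_iff_ne_zero.mpr hMt)
    have hrk := Matrix.rank_of_isUnit _ hunit
    have hfac : (L * U).submatrix (fun k => r (Fin.castLE (le_refl t) k))
          (fun k => c (Fin.castLE (le_refl t) k))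
        = (1 : Matrix (Fin m) (Fin m) F).submatrix (fun k => r (Fin.castLE (le_refl t) k)) _root_.id *
          ((L * U) * (1 : Matrix (Fin n) (Fin n) F).submatrix _root_.id
            (fun k => c (Fin.castLE (le_refl t) k))) := by
      ext i j
      simp [Matrix.mul_apply, Matrix.one_apply, Finset.sum_ite_eq, Finset.sum_ite_eq',
        mul_ite, ite_mul]
    have h2 : t ≤ (L * U).rank := by
      calc t = Fintype.card (Fin t) := (Fintype.card_fin t).symm
        _ = ((L * U).submatrix (fun k => r (Fin.castLE (le_refl t) k))
              (fun k => c (Fin.castLE (le_refl t) k))).rank := hrk.symm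
        _ ≤ (L * U).rank := by
              rw [hfac]
              exact le_trans (Matrix.rank_mul_le_right _ _) (Matrix.rank_mul_le_left _ _)
    exact le_antisymm h1 h2
  have hzero : ∀ (s : ℕ) (hs : s ≤ t) (f : Fin s → Fin m) (g : Fin s → Fin n),
      StrictMono f → StrictMono g →
      (¬ (∀ k, r (Fin.castLE hs k) ≤ f k) ∨ ¬ (∀ k, c (Fin.castLE hs k) ≤ g k)) →
      ((L * U).submatrix f g).det = 0 := by
    intro s hs f g hf hg hor
    rcases hor with h | h
    · push_neg at h
      obtain ⟨k, hk⟩ := h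
      exact key_det_zero L U f g k (lt_of_lt_of_le k.2 hs) (fun i p hik hkp =>
        (hL p).2 _ (lt_of_le_of_lt (hf.monotone hik)
          (lt_of_lt_of_le hk (hr.monotone (Fin.le_def.mpr hkp)))))
    · push_neg at h
      obtain ⟨k, hk⟩ := h
      rw [← Matrix.det_transpose, Matrix.transpose_submatrix, Matrix.transpose_mul]
      exact key_det_zero Uᵀ Lᵀ g f k (lt_of_lt_of_le k.2 hs) (fun i p hik hkp =>
        (hU p).2 _ (lt_of_le_of_lt (hg.monotone hik)
          (lt_of_lt_of_le hk (hc.monotone (Fin.le_def.mpr hkp)))))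
  exact ⟨⟨hrank, hminne, hzero⟩, hrank, fun s hs => ⟨hmin s hs, hminne s hs⟩⟩
end

section
/- Let A be an m×n matrix over a field in the class M_{r,c}, with r = {r_1,...,r_t} and c = {c_1,...,c_t}. Define the m×t matrix L by l_{ij} = 0 for i < r_j and l_{ij} = [r_1,...,r_{j-1},i | c_1,...,c_j]_A / [r_1,...,r_j | c_1,...,c_j]_A for i ≥ r_j, and define the t×n matrix U by u_{ij} = 0 for j < c_i and u_{ij} = [r_1,...,r_i | c_1,...,c_{i-1},j]_A / [r_1,...,r_{i-1} | c_1,...,c_{i-1}]_A for j ≥ c_i. Then L ∈ L_r^* , U ∈ U_c, and A = LU. -/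
open Matrix

/-- The explicit L factor of Theorem 1.4. -/
noncomputable def expL {F : Type} [Field F] {m n t : ℕ} (A : Matrix (Fin m) (Fin n) F)
    (r : Fin t → Fin m) (c : Fin t → Fin n) : Matrix (Fin m) (Fin t) F :=
  fun i j =>
    if r j ≤ i then
      (A.submatrix (Fin.snoc (fun k : Fin j.val => r (Fin.castLE j.isLt.le k)) i)
          (fun k : Fin (j.val + 1) => c (Fin.castLE j.isLt k))).det /
      (A.submatrix (fun k : Fin (j.val + 1) => r (Fin.castLE j.isLt k))
          (fun k : Fin (j.val + 1) => c (Fin.castLE j.isLt k))).det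
    else 0

/-- The explicit U factor of Theorem 1.4. -/
noncomputable def expU {F : Type} [Field F] {m n t : ℕ} (A : Matrix (Fin m) (Fin n) F)
    (r : Fin t → Fin m) (c : Fin t → Fin n) : Matrix (Fin t) (Fin n) F :=
  fun i j =>
    if c i ≤ j then
      (A.submatrix (fun k : Fin (i.val + 1) => r (Fin.castLE i.isLt k))
          (Fin.snoc (fun k : Fin i.val => c (Fin.castLE i.isLt.le k)) j)).det /
      (A.submatrix (fun k : Fin i.val => r (Fin.castLE i.isLt.le k))
          (fun k : Fin i.val => c (Fin.castLE i.isLt.le k))).det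
    else 0

/-!
Write `D_k` for the leading minor on `r_1, …, r_k` and `c_1, …, c_k`, and `P_k(i, j)` for the
minor obtained by bordering it with row `i` and column `j`, so `D_0 = 1`, `P_0(i, j) = a_ij`
and `D_{k+1} = P_k(r_{k+1}, c_{k+1})`. Sylvester's identity, obtained from the Schur complement of
the leading block,
  `P_{k+1}(i, j) D_k = P_k(r_{k+1}, c_{k+1}) P_k(i, j) - P_k(i, c_{k+1}) P_k(r_{k+1}, j)`,
says precisely that `l_{i,k+1} u_{k+1,j} = P_k(i, j) / D_k - P_{k+1}(i, j) / D_{k+1}` whenever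
`r_{k+1} ≤ i` and `c_{k+1} ≤ j`. Hence the partial sums of `(LU)_{ij}` telescope to
`a_ij - P_k(i, j) / D_k` as long as these inequalities hold. Since `r` and `c` increase, once they
fail every later term vanishes, and the minor `P_k(i, j)` reached at that point is zero by the
vanishing conditions of `M_{r,c}` (after discarding repeated rows or columns); if they never fail,
`P_t(i, j)` is a `(t + 1)`-minor of a matrix of rank `t`.
-/

section

variable {F : Type*} [Field F] {α β : Type*}

theorem Fin.snoc_comp_castLE_self {γ : Type*} {t : ℕ} (f : Fin t → γ) (k : Fin t) :
    Fin.snoc (fun s : Fin k => f (Fin.castLE k.isLt.le s)) (f k) =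
      fun s : Fin (k + 1) => f (Fin.castLE k.isLt s) := by
  ext s
  refine Fin.lastCases ?_ (fun s => ?_) s
  · rw [Fin.snoc_last]; rfl
  · rw [Fin.snoc_castSucc]; rfl

theorem det_submatrix_append {k l : ℕ} (A : Matrix α β F) (f : Fin k → α) (u : Fin l → α)
    (g : Fin k → β) (v : Fin l → β) :
    (A.submatrix (Fin.append f u) (Fin.append g v)).det =
      (A.submatrix (Sum.elim f u) (Sum.elim g v)).det := by
  rw [← det_submatrix_equiv_self finSumFinEquiv, submatrix_submatrix]
  congr 2 <;> exact Fin.append_comp_sumElim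

theorem det_submatrix_sumElim {ι κ : Type*} [Fintype ι] [DecidableEq ι] [Fintype κ]
    [DecidableEq κ] (A : Matrix α β F) (f : ι → α) (g : ι → β) (u : κ → α) (v : κ → β)
    [Invertible (A.submatrix f g)] :
    (A.submatrix (Sum.elim f u) (Sum.elim g v)).det = (A.submatrix f g).det *
      (A.submatrix u v - A.submatrix u g * ⅟(A.submatrix f g) * A.submatrix f v).det := by
  rw [← det_fromBlocks₁₁]
  congr 1
  ext (_ | _) (_ | _) <;> rfl

theorem Fin.snoc_eq_append_single {γ : Type*} {k : ℕ} (f : Fin k → γ) (x : γ) :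
    Fin.snoc f x = Fin.append f ![x] :=
  (Fin.append_right_eq_snoc f ![x]).symm

theorem Fin.snoc_snoc_eq_append {γ : Type*} {k : ℕ} (f : Fin k → γ) (x y : γ) :
    Fin.snoc (Fin.snoc f x) y = Fin.append f ![x, y] := by
  ext i
  refine Fin.lastCases ?_ (fun i => Fin.lastCases ?_ (fun i => ?_) i) i
  · rw [Fin.snoc_last]; exact (Fin.append_right f ![x, y] 1).symm
  · rw [Fin.snoc_castSucc, Fin.snoc_last]; exact (Fin.append_right f ![x, y] 0).symm
  · rw [Fin.snoc_castSucc, Fin.snoc_castSucc]; exact (Fin.append_left f ![x, y] i).symm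

theorem det_submatrix_snoc_snoc_mul_det {k : ℕ} (A : Matrix α β F) (f : Fin k → α)
    (g : Fin k → β) (x x' : α) (y y' : β) (h : (A.submatrix f g).det ≠ 0) :
    (A.submatrix (Fin.snoc (Fin.snoc f x) x') (Fin.snoc (Fin.snoc g y) y')).det *
        (A.submatrix f g).det =
      (A.submatrix (Fin.snoc f x) (Fin.snoc g y)).det *
          (A.submatrix (Fin.snoc f x') (Fin.snoc g y')).det -
        (A.submatrix (Fin.snoc f x') (Fin.snoc g y)).det *
          (A.submatrix (Fin.snoc f x) (Fin.snoc g y')).det := by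
  have := invertibleOfIsUnitDet _ (isUnit_iff_ne_zero.mpr h)
  obtain ⟨S, hS⟩ : ∃ S : Matrix (Fin 2) (Fin 2) F, S = A.submatrix ![x, x'] ![y, y'] -
      A.submatrix ![x, x'] g * ⅟(A.submatrix f g) * A.submatrix f ![y, y'] := ⟨_, rfl⟩
  have bordered : ∀ a b : Fin 2, (A.submatrix (Fin.snoc f (![x, x'] a))
      (Fin.snoc g (![y, y'] b))).det = (A.submatrix f g).det * S a b := by
    intro a b
    rw [Fin.snoc_eq_append_single, Fin.snoc_eq_append_single, det_submatrix_append,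
      det_submatrix_sumElim, det_unique (n := Fin 1), hS]
    simp only [Matrix.sub_apply, Matrix.mul_apply, Matrix.submatrix_apply]
    rfl
  rw [Fin.snoc_snoc_eq_append, Fin.snoc_snoc_eq_append, det_submatrix_append,
    det_submatrix_sumElim, ← hS, det_fin_two]
  have h00 := bordered 0 0
  have h01 := bordered 0 1
  have h10 := bordered 1 0
  have h11 := bordered 1 1
  simp only [Matrix.cons_val_zero, Matrix.cons_val_one] at h00 h01 h10 h11
  rw [h00, h01, h10, h11]
  ring

theorem Fin.strictMono_snoc {γ : Type*} [Preorder γ] {k : ℕ} {f : Fin k → γ} {x : γ}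
    (hf : StrictMono f) (hx : ∀ s, f s < x) : StrictMono (Fin.snoc f x : Fin (k + 1) → γ) := by
  intro a b hab
  induction b using Fin.lastCases with
  | last =>
    induction a using Fin.lastCases with
    | last => exact absurd hab (lt_irrefl _)
    | cast a => rw [Fin.snoc_castSucc, Fin.snoc_last]; exact hx a
  | cast b =>
    induction a using Fin.lastCases with
    | last => exact absurd (hab.trans (Fin.castSucc_lt_last b)) (lt_irrefl _)
    | cast a =>
      rw [Fin.snoc_castSucc, Fin.snoc_castSucc]
      exact hf (Fin.castSucc_lt_castSucc_iff.1 hab)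

theorem det_submatrix_eq_zero_of_rank_lt {ι : Type*} [Fintype ι] [DecidableEq ι]
    [Fintype β] (A : Matrix α β F) (f : ι → α) (g : ι → β) (h : A.rank < Fintype.card ι) :
    (A.submatrix f g).det = 0 := by
  by_contra hdet
  have := rank_submatrix_le A f g
  rw [rank_of_det_ne_zero hdet] at this
  omega

end

section ExplicitFactors

variable {F : Type} [Field F] {m n t : ℕ}
  (A : Matrix (Fin m) (Fin n) F) (r : Fin t → Fin m) (c : Fin t → Fin n)

def leadingMinor (k : ℕ) (hk : k ≤ t) : F :=
  (A.submatrix (fun s : Fin k => r (Fin.castLE hk s)) (fun s : Fin k => c (Fin.castLE hk s))).det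

def borderedMinor (k : ℕ) (hk : k ≤ t) (i : Fin m) (j : Fin n) : F :=
  (A.submatrix (Fin.snoc (fun s : Fin k => r (Fin.castLE hk s)) i)
    (Fin.snoc (fun s : Fin k => c (Fin.castLE hk s)) j)).det

theorem leadingMinor_zero : leadingMinor A r c 0 (Nat.zero_le t) = 1 :=
  det_fin_zero

theorem borderedMinor_zero (i : Fin m) (j : Fin n) :
    borderedMinor A r c 0 (Nat.zero_le t) i j = A i j :=
  det_fin_one _

theorem borderedMinor_self (k : Fin t) :
    borderedMinor A r c k k.isLt.le (r k) (c k) = leadingMinor A r c (k + 1) k.isLt := by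
  rw [borderedMinor, Fin.snoc_comp_castLE_self, Fin.snoc_comp_castLE_self, leadingMinor]

theorem expL_of_le {i : Fin m} {k : Fin t} (h : r k ≤ i) :
    expL A r c i k =
      borderedMinor A r c k k.isLt.le i (c k) / leadingMinor A r c (k + 1) k.isLt := by
  rw [expL, if_pos h, borderedMinor, Fin.snoc_comp_castLE_self, leadingMinor]

theorem expU_of_le {k : Fin t} {j : Fin n} (h : c k ≤ j) :
    expU A r c k j =
      borderedMinor A r c k k.isLt.le (r k) j / leadingMinor A r c k k.isLt.le := by
  rw [expU, if_pos h, borderedMinor, Fin.snoc_comp_castLE_self, leadingMinor]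

theorem borderedMinor_succ_mul (k : Fin t) (i : Fin m) (j : Fin n)
    (hk : leadingMinor A r c k k.isLt.le ≠ 0) :
    borderedMinor A r c (k + 1) k.isLt i j * leadingMinor A r c k k.isLt.le =
      borderedMinor A r c k k.isLt.le (r k) (c k) * borderedMinor A r c k k.isLt.le i j -
        borderedMinor A r c k k.isLt.le i (c k) * borderedMinor A r c k k.isLt.le (r k) j := by
  rw [borderedMinor, ← Fin.snoc_comp_castLE_self, ← Fin.snoc_comp_castLE_self]
  exact det_submatrix_snoc_snoc_mul_det A _ _ (r k) i (c k) j hk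

theorem expL_mul_expU_of_le (hD : ∀ s (hs : s ≤ t), leadingMinor A r c s hs ≠ 0)
    {i : Fin m} {j : Fin n} {k : Fin t} (hi : r k ≤ i) (hj : c k ≤ j) :
    expL A r c i k * expU A r c k j =
      borderedMinor A r c k k.isLt.le i j / leadingMinor A r c k k.isLt.le -
        borderedMinor A r c (k + 1) k.isLt i j / leadingMinor A r c (k + 1) k.isLt := by
  have hstep := borderedMinor_succ_mul A r c k i j (hD _ _)
  rw [expL_of_le A r c hi, expU_of_le A r c hj]
  rw [borderedMinor_self] at hstep
  have := hD k k.isLt.le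
  have := hD (k + 1) k.isLt
  field_simp
  linear_combination hstep

theorem expL_mul_expU_of_not_le {i : Fin m} {j : Fin n} {k : Fin t}
    (h : ¬(r k ≤ i ∧ c k ≤ j)) : expL A r c i k * expU A r c k j = 0 := by
  rcases not_and_or.1 h with hi | hj
  · rw [expL, if_neg hi, zero_mul]
  · rw [expU, if_neg hj, mul_zero]

theorem borderedMinor_eq_zero_of_rank (hA : A.rank = t) (i : Fin m) (j : Fin n) :
    borderedMinor A r c t le_rfl i j = 0 :=
  det_submatrix_eq_zero_of_rank_lt A _ _ (by simp [hA])

theorem borderedMinor_eq_zero_of_not_le (hr : StrictMono r) (hc : StrictMono c)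
    (hA : InM A r c) {i : Fin m} {j : Fin n} (k : Fin t)
    (hgood : ∀ s : Fin k, r (Fin.castLE k.isLt.le s) ≤ i ∧ c (Fin.castLE k.isLt.le s) ≤ j)
    (hbad : ¬(r k ≤ i ∧ c k ≤ j)) :
    borderedMinor A r c k k.isLt.le i j = 0 := by
  by_cases hrow : ∃ s : Fin k, r (Fin.castLE k.isLt.le s) = i
  · obtain ⟨s, hs⟩ := hrow
    refine det_zero_of_row_eq (Fin.castSucc_lt_last s).ne (funext fun _ => ?_)
    simp [hs]
  by_cases hcol : ∃ s : Fin k, c (Fin.castLE k.isLt.le s) = j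
  · obtain ⟨s, hs⟩ := hcol
    refine det_zero_of_column_eq (Fin.castSucc_lt_last s).ne (fun _ => ?_)
    simp [hs]
  push Not at hrow hcol
  have hlast : Fin.castLE k.isLt (Fin.last k) = k := rfl
  refine hA.2.2 (k + 1) k.isLt _ _ ?_ ?_ ?_
  · exact Fin.strictMono_snoc (hr.comp (Fin.strictMono_castLE _))
      fun s => (hgood s).1.lt_of_ne (hrow s)
  · exact Fin.strictMono_snoc (hc.comp (Fin.strictMono_castLE _))
      fun s => (hgood s).2.lt_of_ne (hcol s)
  · refine (not_and_or.1 hbad).imp (fun hi hall => hi ?_) (fun hj hall => hj ?_)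
    · simpa [hlast] using hall (Fin.last k)
    · simpa [hlast] using hall (Fin.last k)

theorem sum_expL_mul_expU_castLE (hr : StrictMono r) (hc : StrictMono c) (hA : InM A r c)
    (i : Fin m) (j : Fin n) (k : ℕ) (hk : k ≤ t) :
    ∑ s : Fin k, expL A r c i (Fin.castLE hk s) * expU A r c (Fin.castLE hk s) j =
      A i j - if ∀ s : Fin k, r (Fin.castLE hk s) ≤ i ∧ c (Fin.castLE hk s) ≤ j
        then borderedMinor A r c k hk i j / leadingMinor A r c k hk else 0 := by
  induction k with
  | zero => simp [borderedMinor_zero, leadingMinor_zero]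
  | succ k ih =>
    set K : Fin t := ⟨k, hk⟩
    have hlast : Fin.castLE hk (Fin.last k) = K := rfl
    simp only [Fin.sum_univ_castSucc, Fin.forall_fin_succ', Fin.castLE_castSucc, hlast]
    rw [ih (Nat.le_of_succ_le hk)]
    by_cases hgood :
        ∀ s : Fin k, r (Fin.castLE K.isLt.le s) ≤ i ∧ c (Fin.castLE K.isLt.le s) ≤ j
    · by_cases hK : r K ≤ i ∧ c K ≤ j
      · rw [if_pos hgood, if_pos ⟨hgood, hK⟩, expL_mul_expU_of_le A r c hA.2.1 hK.1 hK.2]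
        ring
      · rw [if_pos hgood, if_neg fun h => hK h.2, expL_mul_expU_of_not_le A r c hK,
          borderedMinor_eq_zero_of_not_le A r c hr hc hA K hgood hK]
        ring
    · obtain ⟨s, hbad⟩ := not_forall.1 hgood
      have hsK : Fin.castLE K.isLt.le s ≤ K := s.isLt.le
      have hK : ¬(r K ≤ i ∧ c K ≤ j) := fun h =>
        hbad ⟨(hr.monotone hsK).trans h.1, (hc.monotone hsK).trans h.2⟩
      rw [if_neg hgood, if_neg fun h => hgood h.1, expL_mul_expU_of_not_le A r c hK]
      ring

end ExplicitFactors

theorem explicit_LU {F : Type} [Field F] {m n t : ℕ}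
    (A : Matrix (Fin m) (Fin n) F) (r : Fin t → Fin m) (c : Fin t → Fin n)
    (hr : StrictMono r) (hc : StrictMono c) (hA : InM A r c) :
    InLstar (expL A r c) r ∧ InU (expU A r c) c ∧ A = expL A r c * expU A r c := by
  have hD : ∀ s (hs : s ≤ t), leadingMinor A r c s hs ≠ 0 := hA.2.1
  refine ⟨fun k => ⟨?_, fun i hi => if_neg hi.not_ge⟩,
    fun k => ⟨?_, fun j hj => if_neg hj.not_ge⟩, ?_⟩
  · rw [expL_of_le A r c le_rfl, borderedMinor_self]
    exact div_self (hD _ _)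
  · rw [expU_of_le A r c le_rfl, borderedMinor_self]
    exact div_ne_zero (hD _ _) (hD _ _)
  · ext i j
    have hsum := sum_expL_mul_expU_castLE A r c hr hc hA i j t le_rfl
    simp only [Fin.castLE_rfl, id] at hsum
    rw [mul_apply, hsum, borderedMinor_eq_zero_of_rank A r c hA.1, zero_div, ite_self, sub_zero]
end

section
/- Let A be an m×n matrix over a field in the class M_{r,c} with r = {r_1,...,r_t}, c = {c_1,...,c_t}. Then there exists a unique pair of matrices (L, U) with L ∈ L_r^* (m×t) and U ∈ U_c (t×n) such that A = LU. -/
open Matrix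

section Helpers
variable {F : Type} [Field F]

/-- entry of `M⁻¹ *ᵥ v` via Cramer. -/
lemma inv_mulVec_apply {t : ℕ} (M : Matrix (Fin t) (Fin t) F) (v : Fin t → F) (k : Fin t) :
    (M⁻¹ *ᵥ v) k = Ring.inverse M.det * (M.updateCol k v).det := by
  rw [Matrix.inv_def, smul_mulVec, ← cramer_eq_adjugate_mulVec]
  simp [cramer_apply]

lemma inv_mul_apply {t : ℕ} {ι : Type*} [Fintype ι] (M : Matrix (Fin t) (Fin t) F)
    (N : Matrix (Fin t) ι F) (k : Fin t) (j : ι) :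
    (M⁻¹ * N) k j = Ring.inverse M.det * (M.updateCol k (fun l => N l j)).det := by
  rw [← inv_mulVec_apply]
  simp [Matrix.mul_apply, Matrix.mulVec, dotProduct]

lemma mul_inv_apply {t : ℕ} {ι : Type*} [Fintype ι] (M : Matrix (Fin t) (Fin t) F)
    (N : Matrix ι (Fin t) F) (i : ι) (k : Fin t) :
    (N * M⁻¹) i k = Ring.inverse M.det * (M.updateRow k (fun l => N i l)).det := by
  have : (N * M⁻¹) i k = ((N * M⁻¹)ᵀ) k i := rfl
  rw [this, Matrix.transpose_mul, Matrix.transpose_nonsing_inv, inv_mul_apply,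
    Matrix.det_transpose]
  congr 1
  rw [show (fun l => Nᵀ l i) = (fun l => N i l) from rfl, Matrix.updateCol_transpose,
    Matrix.det_transpose]

end Helpers

section Aux
variable {F : Type} [Field F] {m n t : ℕ}

lemma det_submatrix_zero_of_count
    (A : Matrix (Fin m) (Fin n) F) (r : Fin t → Fin m) (c : Fin t → Fin n)
    (hvan : ∀ f : Fin t → Fin m, StrictMono f → (¬ ∀ k, r k ≤ f k) →
      (A.submatrix f c).det = 0)
    (f : Fin t → Fin m) (j : Fin t)
    (hcard : (j : ℕ) < (Finset.univ.filter (fun p => f p < r j)).card) :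
    (A.submatrix f c).det = 0 := by
  by_cases hinj : Function.Injective f
  · set σ := Tuple.sort f with hσ
    have hmono : Monotone (f ∘ σ) := Tuple.monotone_sort f
    have hsm : StrictMono (f ∘ σ) := hmono.strictMono_of_injective (hinj.comp σ.injective)
    have hlt : (f ∘ σ) j < r j := by
      by_contra hge
      push_neg at hge
      have hsub : (Finset.univ.filter (fun p => (f ∘ σ) p < r j)) ⊆ Finset.Iio j := by
        intro p hp
        simp only [Finset.mem_filter] at hp
        rw [Finset.mem_Iio]
        by_contra hpj
        push_neg at hpj
        exact absurd (lt_of_le_of_lt (hge.trans (hsm.monotone hpj)) hp.2) (lt_irrefl _)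
      have hcard2 : (Finset.univ.filter (fun p => (f ∘ σ) p < r j)).card
          = (Finset.univ.filter (fun p => f p < r j)).card := by
        apply Finset.card_bij (fun p _ => σ p)
        · intro p hp; simp only [Finset.mem_filter] at hp ⊢; exact ⟨Finset.mem_univ _, hp.2⟩
        · intro p _ q _ h; exact σ.injective h
        · intro q hq
          refine ⟨σ.symm q, ?_, by simp⟩
          simp only [Finset.mem_filter, Function.comp_apply, Equiv.apply_symm_apply] at hq ⊢
          exact ⟨Finset.mem_univ _, hq.2⟩
      have := (Finset.card_le_card hsub).trans_eq (Fin.card_Iio j)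
      omega
    have hz : (A.submatrix (f ∘ σ) c).det = 0 :=
      hvan _ hsm (by push_neg; exact ⟨j, hlt⟩)
    have hperm : (A.submatrix (f ∘ σ) c) = (A.submatrix f c).submatrix σ id := by
      ext p q; rfl
    rw [hperm, Matrix.det_permute] at hz
    rcases Int.units_eq_one_or (Equiv.Perm.sign σ) with h | h <;>
      simp [h] at hz <;> exact hz
  · rw [Function.not_injective_iff] at hinj
    obtain ⟨p, q, hfe, hne⟩ := hinj
    exact Matrix.det_zero_of_row_eq hne (by ext l; simp [hfe])

end Aux


/-- rank of an arbitrary submatrix. -/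
lemma rank_submatrix_le' {F : Type} [Field F] {m n : ℕ} {ι ι' : Type} [Fintype ι] [Fintype ι'] [DecidableEq ι]
    (A : Matrix (Fin m) (Fin n) F) (f : ι → Fin m) (g : ι' → Fin n) :
    (A.submatrix f g).rank ≤ A.rank := by
  have h1 : A.submatrix f id = ((1 : Matrix (Fin m) (Fin m) F).submatrix f (Equiv.refl (Fin m))) * A := by
    rw [one_submatrix_mul]; rfl
  have h2 : A.submatrix f g = (A.submatrix f id) * ((1 : Matrix (Fin n) (Fin n) F).submatrix (Equiv.refl (Fin n)) g) := by
    rw [mul_submatrix_one]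
    simp [submatrix_submatrix]
  calc (A.submatrix f g).rank ≤ (A.submatrix f id).rank := by
        rw [h2]; exact rank_mul_le_left _ _
    _ ≤ A.rank := by rw [h1]; exact rank_mul_le_right _ _

section LU
variable {F : Type} [Field F]

lemma exists_LU : ∀ (t : ℕ) (D : Matrix (Fin t) (Fin t) F),
    (∀ (s : ℕ) (hs : s ≤ t), (D.submatrix (Fin.castLE hs) (Fin.castLE hs)).det ≠ 0) →
    ∃ Λ Υ : Matrix (Fin t) (Fin t) F,
      (∀ i, Λ i i = 1) ∧ (∀ i j, i < j → Λ i j = 0) ∧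
      (∀ i, Υ i i ≠ 0) ∧ (∀ i j, j < i → Υ i j = 0) ∧ D = Λ * Υ := by
  intro t
  induction t with
  | zero =>
    intro D _
    refine ⟨1, 1, fun i => i.elim0, fun i => i.elim0, fun i => i.elim0, fun i => i.elim0, ?_⟩
    ext i j; exact i.elim0
  | succ t IH =>
    intro D hD
    set e : Fin t ⊕ Fin 1 ≃ Fin (t + 1) := finSumFinEquiv with he
    set DB : Matrix (Fin t ⊕ Fin 1) (Fin t ⊕ Fin 1) F := D.submatrix e e with hDB
    have val_inl : ∀ (x : Fin (t + 1)) (a : Fin t), e.symm x = Sum.inl a → (x : ℕ) = a := by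
      intro x a hx
      have h1 := congrArg e hx
      rw [Equiv.apply_symm_apply] at h1
      rw [h1, he]
      simp
    have val_inr : ∀ (x : Fin (t + 1)) (a : Fin 1), e.symm x = Sum.inr a → (x : ℕ) = t := by
      intro x a hx
      have h1 := congrArg e hx
      rw [Equiv.apply_symm_apply] at h1
      rw [h1, he]
      simp [Fin.val_eq_zero]
    have hPmin : ∀ (s : ℕ) (hs : s ≤ t),
        ((DB.toBlocks₁₁).submatrix (Fin.castLE hs) (Fin.castLE hs)).det ≠ 0 := by
      intro s hs
      have h1 : (DB.toBlocks₁₁).submatrix (Fin.castLE hs) (Fin.castLE hs)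
          = D.submatrix (Fin.castLE (hs.trans t.le_succ)) (Fin.castLE (hs.trans t.le_succ)) := by
        ext p q
        simp only [Matrix.toBlocks₁₁, Matrix.submatrix_apply, Matrix.of_apply, hDB]
        congr 1 <;> · apply Fin.ext; simp [he]
      rw [h1]; exact hD s (hs.trans t.le_succ)
    obtain ⟨Λ', Υ', hΛd, hΛu, hΥd, hΥl, hPLU⟩ := IH DB.toBlocks₁₁ hPmin
    have hΛ'det : Λ'.det = 1 := by
      rw [Matrix.det_of_lowerTriangular Λ' (fun p q h => hΛu p q h)]
      · simp [hΛd]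
    have hΥ'det : Υ'.det ≠ 0 := by
      have hPdet : DB.toBlocks₁₁.det ≠ 0 := by
        have := hPmin t le_rfl
        simpa using this
      rw [hPLU, Matrix.det_mul] at hPdet
      exact fun h => hPdet (by rw [h, mul_zero])
    set b : Matrix (Fin t) (Fin 1) F := DB.toBlocks₁₂ with hb
    set c' : Matrix (Fin 1) (Fin t) F := DB.toBlocks₂₁ with hc'
    set d : Matrix (Fin 1) (Fin 1) F := DB.toBlocks₂₂ with hd
    set w : Matrix (Fin 1) (Fin t) F := c' * Υ'⁻¹ with hw
    set v : Matrix (Fin t) (Fin 1) F := Λ'⁻¹ * b with hv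
    set u : Matrix (Fin 1) (Fin 1) F := d - w * v with hu
    set ΛB : Matrix (Fin t ⊕ Fin 1) (Fin t ⊕ Fin 1) F := Matrix.fromBlocks Λ' 0 w 1 with hΛB
    set ΥB : Matrix (Fin t ⊕ Fin 1) (Fin t ⊕ Fin 1) F := Matrix.fromBlocks Υ' v 0 u with hΥB
    have hΛ'inv : Λ' * Λ'⁻¹ = 1 := Matrix.mul_nonsing_inv _ (by rw [hΛ'det]; exact isUnit_one)
    have hΥ'inv : Υ'⁻¹ * Υ' = 1 := Matrix.nonsing_inv_mul _ (Ne.isUnit hΥ'det)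
    have h12 : Λ' * v = b := by rw [hv, ← Matrix.mul_assoc, hΛ'inv, Matrix.one_mul]
    have h21 : w * Υ' = c' := by rw [hw, Matrix.mul_assoc, hΥ'inv, Matrix.mul_one]
    have h22 : w * v + u = d := by rw [hu]; abel
    have hblocks : DB = ΛB * ΥB := by
      have hm : ΛB * ΥB = Matrix.fromBlocks (Λ' * Υ') b c' d := by
        rw [hΛB, hΥB, Matrix.fromBlocks_multiply]
        simp only [Matrix.mul_zero, Matrix.zero_mul, Matrix.mul_one, Matrix.one_mul,
          add_zero, zero_add, h12, h21]
        rw [h22]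
      rw [hm, ← hPLU, hb, hc', hd, Matrix.fromBlocks_toBlocks]
    have hu00 : u 0 0 ≠ 0 := by
      have hDdet : D.det ≠ 0 := by
        have := hD (t + 1) le_rfl
        simpa [show (Fin.castLE (le_refl (t + 1))) = id from rfl] using this
      have hDBdet : DB.det ≠ 0 := by
        rw [hDB, Matrix.det_submatrix_equiv_self]; exact hDdet
      rw [hblocks, Matrix.det_mul, hΥB, Matrix.det_fromBlocks_zero₂₁] at hDBdet
      intro h
      apply hDBdet
      have hud : u.det = 0 := by rw [Matrix.det_fin_one, h]
      rw [hud, mul_zero, mul_zero]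
    refine ⟨ΛB.submatrix e.symm e.symm, ΥB.submatrix e.symm e.symm, ?_, ?_, ?_, ?_, ?_⟩
    · intro i
      rcases hx : e.symm i with a | a <;> simp only [Matrix.submatrix_apply, hx]
      · simp [hΛB, hΛd]
      · simp [hΛB, Matrix.one_apply]
    · intro i j hij
      have hij' : (i : ℕ) < (j : ℕ) := hij
      rcases hx : e.symm i with a | a <;> rcases hy : e.symm j with b2 | b2 <;>
        simp only [Matrix.submatrix_apply, hx, hy]
      · refine hΛu a b2 ?_
        have h1 := val_inl i a hx; have h2 := val_inl j b2 hy
        exact (Fin.lt_def.mpr (by omega))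
      · simp [hΛB]
      · exfalso
        have h1 := val_inr i a hx; have h2 := val_inl j b2 hy
        have := b2.isLt; omega
      · exfalso
        have h1 := val_inr i a hx; have h2 := val_inr j b2 hy
        omega
    · intro i
      rcases hx : e.symm i with a | a <;> simp only [Matrix.submatrix_apply, hx]
      · simpa [hΥB] using hΥd a
      · have ha : a = 0 := Subsingleton.elim _ _
        subst ha
        simpa [hΥB] using hu00
    · intro i j hij
      have hij' : (j : ℕ) < (i : ℕ) := hij
      rcases hx : e.symm i with a | a <;> rcases hy : e.symm j with b2 | b2 <;>
        simp only [Matrix.submatrix_apply, hx, hy]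
      · refine hΥl a b2 ?_
        have h1 := val_inl i a hx; have h2 := val_inl j b2 hy
        exact (Fin.lt_def.mpr (by omega))
      · exfalso
        have h1 := val_inl i a hx; have h2 := val_inr j b2 hy
        have := a.isLt; omega
      · simp [hΥB]
      · exfalso
        have h1 := val_inr i a hx; have h2 := val_inr j b2 hy
        omega
    · rw [Matrix.submatrix_mul_equiv, ← hblocks, hDB]
      simp [Matrix.submatrix_submatrix]

end LU

section Main

open Matrix

variable {F : Type} [Field F] {m n t : ℕ}

/-- Uniqueness part. -/
lemma LU_unique (r : Fin t → Fin m) (c : Fin t → Fin n)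
    (hr : StrictMono r) (hc : StrictMono c)
    (L₁ : Matrix (Fin m) (Fin t) F) (U₁ : Matrix (Fin t) (Fin n) F)
    (L₂ : Matrix (Fin m) (Fin t) F) (U₂ : Matrix (Fin t) (Fin n) F)
    (h1 : InLstar L₁ r) (h2 : InU U₁ c) (h3 : InLstar L₂ r) (h4 : InU U₂ c)
    (heq : L₁ * U₁ = L₂ * U₂) : L₁ = L₂ ∧ U₁ = U₂ := by
  set L₁r : Matrix (Fin t) (Fin t) F := L₁.submatrix r id with hL₁r
  set L₂r : Matrix (Fin t) (Fin t) F := L₂.submatrix r id with hL₂r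
  set U₁c : Matrix (Fin t) (Fin t) F := U₁.submatrix id c with hU₁c
  set U₂c : Matrix (Fin t) (Fin t) F := U₂.submatrix id c with hU₂c
  have hL₁tri : L₁r.BlockTriangular OrderDual.toDual := by
    intro p q hpq
    exact (h1 q).2 (r p) (hr hpq)
  have hL₂tri : L₂r.BlockTriangular OrderDual.toDual := by
    intro p q hpq
    exact (h3 q).2 (r p) (hr hpq)
  have hU₁tri : U₁c.BlockTriangular id := by
    intro p q hpq
    exact (h2 p).2 (c q) (hc hpq)
  have hU₂tri : U₂c.BlockTriangular id := by
    intro p q hpq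
    exact (h4 p).2 (c q) (hc hpq)
  have hL₁diag : ∀ p, L₁r p p = 1 := fun p => (h1 p).1
  have hL₂diag : ∀ p, L₂r p p = 1 := fun p => (h3 p).1
  have hL₁det : IsUnit L₁r.det := by
    rw [Matrix.det_of_lowerTriangular L₁r hL₁tri]
    simp [hL₁diag]
  have hL₂det : IsUnit L₂r.det := by
    rw [Matrix.det_of_lowerTriangular L₂r hL₂tri]
    simp [hL₂diag]
  have hU₁det : IsUnit U₁c.det := by
    rw [Matrix.det_of_upperTriangular hU₁tri]
    exact (Finset.prod_ne_zero_iff.mpr (fun p _ => (h2 p).1)).isUnit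
  have E1 : L₁r * U₁ = L₂r * U₂ := by
    have e1 := Matrix.submatrix_mul L₁ U₁ r id id Function.bijective_id
    have e2 := Matrix.submatrix_mul L₂ U₂ r id id Function.bijective_id
    rw [Matrix.submatrix_id_id] at e1 e2
    rw [hL₁r, hL₂r, ← e1, ← e2, heq]
  have E2 : L₁ * U₁c = L₂ * U₂c := by
    have e1 := Matrix.submatrix_mul L₁ U₁ id id c Function.bijective_id
    have e2 := Matrix.submatrix_mul L₂ U₂ id id c Function.bijective_id
    rw [Matrix.submatrix_id_id] at e1 e2
    rw [hU₁c, hU₂c, ← e1, ← e2, heq]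
  have E3 : L₁r * U₁c = L₂r * U₂c := by
    have e1 := Matrix.submatrix_mul L₁r U₁ id id c Function.bijective_id
    have e2 := Matrix.submatrix_mul L₂r U₂ id id c Function.bijective_id
    rw [Matrix.submatrix_id_id] at e1 e2
    rw [hU₁c, hU₂c, ← e1, ← e2, E1]
  set M : Matrix (Fin t) (Fin t) F := L₂r⁻¹ * L₁r with hM
  haveI : Invertible L₂r := L₂r.invertibleOfIsUnitDet hL₂det
  have hMlower : M.BlockTriangular OrderDual.toDual :=
    (Matrix.blockTriangular_inv_of_blockTriangular hL₂tri).mul hL₁tri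
  have hMU : M * U₁c = U₂c := by
    rw [hM, Matrix.mul_assoc, E3, ← Matrix.mul_assoc, Matrix.nonsing_inv_mul _ hL₂det,
      Matrix.one_mul]
  haveI : Invertible U₁c := U₁c.invertibleOfIsUnitDet hU₁det
  have hMeq : M = U₂c * U₁c⁻¹ := by
    rw [← hMU, Matrix.mul_assoc, Matrix.mul_nonsing_inv _ hU₁det, Matrix.mul_one]
  have hMupper : M.BlockTriangular id := by
    rw [hMeq]
    exact hU₂tri.mul (Matrix.blockTriangular_inv_of_blockTriangular hU₁tri)
  have hLM : L₂r * M = L₁r := by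
    rw [hM, ← Matrix.mul_assoc, Matrix.mul_nonsing_inv _ hL₂det, Matrix.one_mul]
  have hM1 : M = 1 := by
    ext p q
    by_cases hpq : p = q
    · subst hpq
      have h6 : (L₂r * M) p p = 1 := by rw [hLM]; exact hL₁diag p
      rw [Matrix.mul_apply] at h6
      rw [Finset.sum_eq_single p] at h6
      · rw [hL₂diag p, one_mul] at h6
        simp [h6, Matrix.one_apply]
      · intro k _ hk
        rcases lt_or_gt_of_ne hk with hlt | hgt
        · rw [hMlower (show OrderDual.toDual p < OrderDual.toDual k from hlt), mul_zero]
        · rw [hMupper (show (id p : Fin t) < id k from hgt), mul_zero]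
      · intro h; exact absurd (Finset.mem_univ p) h
    · rcases lt_or_gt_of_ne hpq with hlt | hgt
      · rw [hMlower (show OrderDual.toDual q < OrderDual.toDual p from hlt)]
        simp [Matrix.one_apply, hpq]
      · rw [hMupper (show (id q : Fin t) < id p from hgt)]
        simp [Matrix.one_apply, hpq]
  have hLr_eq : L₂r = L₁r := by rw [← hLM, hM1, Matrix.mul_one]
  have hUeq : U₁ = U₂ := by
    have h7 : L₁r * U₁ = L₁r * U₂ := by rw [E1, hLr_eq]
    have hL₁inv : IsUnit L₁r.det := hL₁det
    calc U₁ = L₁r⁻¹ * (L₁r * U₁) := by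
          rw [← Matrix.mul_assoc, Matrix.nonsing_inv_mul _ hL₁inv, Matrix.one_mul]
      _ = L₁r⁻¹ * (L₁r * U₂) := by rw [h7]
      _ = U₂ := by rw [← Matrix.mul_assoc, Matrix.nonsing_inv_mul _ hL₁inv, Matrix.one_mul]
  have hLeq : L₁ = L₂ := by
    have hUc_eq : U₁c = U₂c := by rw [hU₁c, hU₂c, hUeq]
    have h8 : L₁ * U₁c = L₂ * U₁c := by rw [E2, hUc_eq]
    calc L₁ = L₁ * U₁c * U₁c⁻¹ := by
          rw [Matrix.mul_assoc, Matrix.mul_nonsing_inv _ hU₁det, Matrix.mul_one]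
      _ = L₂ * U₁c * U₁c⁻¹ := by rw [h8]
      _ = L₂ := by rw [Matrix.mul_assoc, Matrix.mul_nonsing_inv _ hU₁det, Matrix.mul_one]
  exact ⟨hLeq, hUeq⟩

end Main

theorem unique_LU_decomposition {F : Type} [Field F] {m n t : ℕ}
    (A : Matrix (Fin m) (Fin n) F) (r : Fin t → Fin m) (c : Fin t → Fin n)
    (hr : StrictMono r) (hc : StrictMono c) (hA : InM A r c) :
    ∃! LU : Matrix (Fin m) (Fin t) F × Matrix (Fin t) (Fin n) F,
      InLstar LU.1 r ∧ InU LU.2 c ∧ A = LU.1 * LU.2 := by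
  obtain ⟨hrank, hmin, hvan⟩ := hA
  set D : Matrix (Fin t) (Fin t) F := A.submatrix r c with hDdef
  have hDmin : ∀ (s : ℕ) (hs : s ≤ t),
      (D.submatrix (Fin.castLE hs) (Fin.castLE hs)).det ≠ 0 := fun s hs => hmin s hs
  have hDdet : D.det ≠ 0 := by
    have := hDmin t le_rfl
    simpa [show (Fin.castLE (le_refl t)) = id from rfl] using this
  have hDunit : IsUnit D.det := Ne.isUnit hDdet
  obtain ⟨Λ, Υ, hΛd, hΛu, hΥd, hΥl, hDLU⟩ := exists_LU t D hDmin
  have hΛdet1 : Λ.det = 1 := by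
    rw [Matrix.det_of_lowerTriangular Λ (fun p q h => hΛu p q h)]
    simp [hΛd]
  have hΛunit : IsUnit Λ.det := by rw [hΛdet1]; exact isUnit_one
  set B : Matrix (Fin m) (Fin t) F := A.submatrix id c with hBdef
  set C : Matrix (Fin t) (Fin n) F := A.submatrix r id with hCdef
  -- Key rank identity: A = B * D⁻¹ * C
  haveI : Invertible D := D.invertibleOfIsUnitDet hDunit
  have key : A = B * D⁻¹ * C := by
    ext i j
    set f : Fin t ⊕ Fin 1 → Fin m := Sum.elim r (fun _ => i) with hf
    set g : Fin t ⊕ Fin 1 → Fin n := Sum.elim c (fun _ => j) with hg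
    have hXdet : (A.submatrix f g).det = 0 := by
      by_contra hX
      have h1 : (A.submatrix f g).rank = t + 1 := by
        have := Matrix.rank_of_isUnit (A.submatrix f g)
          ((Matrix.isUnit_iff_isUnit_det _).mpr (Ne.isUnit hX))
        simpa using this
      have h2 : (A.submatrix f g).rank ≤ A.rank := rank_submatrix_le' A f g
      rw [hrank, h1] at h2
      omega
    have hXb : A.submatrix f g = Matrix.fromBlocks D
        (Matrix.of fun k (_ : Fin 1) => A (r k) j)
        (Matrix.of fun (_ : Fin 1) l => A i (c l))
        (Matrix.of fun (_ : Fin 1) (_ : Fin 1) => A i j) := by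
      ext (p | p) (q | q) <;> rfl
    rw [hXb, Matrix.det_fromBlocks₁₁] at hXdet
    have h3 := (mul_eq_zero.mp hXdet).resolve_left hDdet
    rw [Matrix.det_fin_one] at h3
    rw [Matrix.sub_apply] at h3
    have h4 : (B * D⁻¹ * C) i j
        = ((Matrix.of fun (_ : Fin 1) l => A i (c l)) * ⅟D
            * (Matrix.of fun k (_ : Fin 1) => A (r k) j)) 0 0 := by
      rw [Matrix.invOf_eq_nonsing_inv]
      rfl
    rw [h4]
    exact sub_eq_zero.mp h3
  set L : Matrix (Fin m) (Fin t) F := B * D⁻¹ * Λ with hLdef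
  set U : Matrix (Fin t) (Fin n) F := Λ⁻¹ * C with hUdef
  have hALU : A = L * U := by
    rw [hLdef, hUdef]
    calc A = B * D⁻¹ * C := key
      _ = B * D⁻¹ * Λ * (Λ⁻¹ * C) := by
          rw [Matrix.mul_assoc (B * D⁻¹) Λ (Λ⁻¹ * C), ← Matrix.mul_assoc Λ Λ⁻¹ C,
            Matrix.mul_nonsing_inv _ hΛunit, Matrix.one_mul]
  -- L restricted to rows r equals Λ
  have hLr : L.submatrix r id = Λ := by
    have e1 := Matrix.submatrix_mul (B * D⁻¹) Λ r id id Function.bijective_id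
    rw [Matrix.submatrix_id_id] at e1
    have e2 := Matrix.submatrix_mul B D⁻¹ r id id Function.bijective_id
    rw [Matrix.submatrix_id_id] at e2
    have e3 : B.submatrix r id = D := rfl
    rw [hLdef, e1, e2, e3, Matrix.mul_nonsing_inv _ hDunit, Matrix.one_mul]
  -- U restricted to columns c equals Υ
  have hUc : U.submatrix id c = Υ := by
    have e1 := Matrix.submatrix_mul Λ⁻¹ C id id c Function.bijective_id
    rw [Matrix.submatrix_id_id] at e1
    have e3 : C.submatrix id c = D := rfl
    rw [hUdef, e1, e3, hDLU, ← Matrix.mul_assoc, Matrix.nonsing_inv_mul _ hΛunit,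
      Matrix.one_mul]
  have hLstar : InLstar L r := by
    intro j
    constructor
    · have := congrFun (congrFun hLr j) j
      simpa using this.trans (hΛd j)
    · intro i hij
      rw [hLdef, Matrix.mul_apply]
      apply Finset.sum_eq_zero
      intro k _
      rcases lt_or_ge k j with hk | hk
      · rw [hΛu k j hk, mul_zero]
      · have hz : (B * D⁻¹) i k = 0 := by
          rw [mul_inv_apply]
          have hupd : D.updateRow k (fun l => B i l)
              = A.submatrix (Function.update r k i) c := by
            ext p q
            by_cases hp : p = k
            · subst hp
              simp only [Matrix.updateRow_self, Matrix.submatrix_apply, Function.update_self]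
              rfl
            · simp only [Matrix.updateRow_ne hp, Matrix.submatrix_apply,
                Function.update_of_ne hp]
              rfl
          rw [hupd, det_submatrix_zero_of_count A r c
            (fun f' hf' hcond => hvan t le_rfl f' c hf' hc (Or.inl hcond))
            (Function.update r k i) j ?_, mul_zero]
          have hknot : k ∉ Finset.Iio j := by simp [not_lt.mpr hk]
          have hsub : insert k (Finset.Iio j)
              ⊆ Finset.univ.filter (fun p => Function.update r k i p < r j) := by
            intro p hp
            rcases Finset.mem_insert.mp hp with hp | hp
            · subst hp
              simp only [Finset.mem_filter, Finset.mem_univ, true_and,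
                Function.update_self]
              exact hij
            · rw [Finset.mem_Iio] at hp
              have hpk : p ≠ k := fun hcon => hknot (by rw [← hcon]; exact Finset.mem_Iio.mpr hp)
              simp only [Finset.mem_filter, Finset.mem_univ, true_and,
                Function.update_of_ne hpk]
              exact hr hp
          calc (j : ℕ) < (Finset.Iio j).card + 1 := by rw [Fin.card_Iio]; omega
            _ = (insert k (Finset.Iio j)).card := (Finset.card_insert_of_notMem hknot).symm
            _ ≤ _ := Finset.card_le_card hsub
        rw [hz, zero_mul]
  have hUin : InU U c := by
    intro i
    constructor
    · have := congrFun (congrFun hUc i) i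
      simp only [Matrix.submatrix_apply, id_eq] at this
      rw [this]
      exact hΥd i
    · intro j hij
      have hUeq : U = Υ * (D⁻¹ * C) := by
        have hC : C = D * (D⁻¹ * C) := by
          rw [← Matrix.mul_assoc, Matrix.mul_nonsing_inv _ hDunit, Matrix.one_mul]
        rw [hUdef]
        conv_lhs => rw [hC]
        rw [hDLU, ← Matrix.mul_assoc Λ⁻¹ (Λ * Υ) _, ← Matrix.mul_assoc Λ⁻¹ Λ Υ,
          Matrix.nonsing_inv_mul _ hΛunit, Matrix.one_mul]
      rw [hUeq, Matrix.mul_apply]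
      apply Finset.sum_eq_zero
      intro k _
      rcases lt_or_ge k i with hk | hk
      · rw [hΥl i k hk, zero_mul]
      · have hz : (D⁻¹ * C) k j = 0 := by
          rw [inv_mul_apply]
          have hupd : D.updateCol k (fun l => C l j)
              = A.submatrix r (Function.update c k j) := by
            ext p q
            by_cases hq : q = k
            · subst hq
              simp only [Matrix.updateCol_self, Matrix.submatrix_apply, Function.update_self]
              rfl
            · simp only [Matrix.updateCol_ne hq, Matrix.submatrix_apply,
                Function.update_of_ne hq]
              rfl
          have htr : (A.submatrix r (Function.update c k j)).det
              = (Aᵀ.submatrix (Function.update c k j) r).det := by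
            rw [← Matrix.det_transpose, Matrix.transpose_submatrix]
          rw [hupd, htr, det_submatrix_zero_of_count Aᵀ c r
            (fun g' hg' hcond => by
              rw [show Aᵀ.submatrix g' r = (A.submatrix r g')ᵀ from rfl, Matrix.det_transpose]
              exact hvan t le_rfl r g' hr hg' (Or.inr hcond))
            (Function.update c k j) i ?_, mul_zero]
          have hknot : k ∉ Finset.Iio i := by simp [not_lt.mpr hk]
          have hsub : insert k (Finset.Iio i)
              ⊆ Finset.univ.filter (fun p => Function.update c k j p < c i) := by
            intro p hp
            rcases Finset.mem_insert.mp hp with hp | hp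
            · subst hp
              simp only [Finset.mem_filter, Finset.mem_univ, true_and,
                Function.update_self]
              exact hij
            · rw [Finset.mem_Iio] at hp
              have hpk : p ≠ k := fun hcon => hknot (by rw [← hcon]; exact Finset.mem_Iio.mpr hp)
              simp only [Finset.mem_filter, Finset.mem_univ, true_and,
                Function.update_of_ne hpk]
              exact hc hp
          calc (i : ℕ) < (Finset.Iio i).card + 1 := by rw [Fin.card_Iio]; omega
            _ = (insert k (Finset.Iio i)).card := (Finset.card_insert_of_notMem hknot).symm
            _ ≤ _ := Finset.card_le_card hsub
        rw [hz, mul_zero]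
  refine ⟨(L, U), ⟨hLstar, hUin, hALU⟩, ?_⟩
  rintro ⟨L', U'⟩ ⟨h1', h2', h3'⟩
  have huniq := LU_unique r c hr hc L' U' L U h1' h2' hLstar hUin (by rw [← h3', ← hALU])
  exact Prod.ext huniq.1 huniq.2
end

section
/- Uniqueness of L-U factors: if A = LU = L'U' where L, L' are m×t matrices in L_r^* and U, U' are t×n matrices in U_c, then L = L' and U = U'. -/
open Matrix

theorem LU_factors_unique {F : Type} [Field F] {m n t : ℕ}
    (L L' : Matrix (Fin m) (Fin t) F) (U U' : Matrix (Fin t) (Fin n) F)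
    (r : Fin t → Fin m) (c : Fin t → Fin n)
    (hr : StrictMono r) (hc : StrictMono c)
    (hL : InLstar L r) (hL' : InLstar L' r) (hU : InU U c) (hU' : InU U' c)
    (h : L * U = L' * U') : L = L' ∧ U = U' := by
  have key : ∀ N : ℕ, ∀ k : Fin t, (k : ℕ) < N →
      (∀ x, U k x = U' k x) ∧ (∀ x, L x k = L' x k) := by
    intro N
    induction N with
    | zero => intro k hk; omega
    | succ N ih =>
      intro k hk
      by_cases hkN : (k : ℕ) < N
      · exact ih k hkN
      · have ih' : ∀ j : Fin t, j < k → (∀ x, U j x = U' j x) ∧ (∀ x, L x j = L' x j) := by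
          intro j hj; exact ih j (by omega)
        have hrow : ∀ x, U k x = U' k x := by
          intro x
          have hA := congrFun (congrFun h (r k)) x
          simp only [Matrix.mul_apply] at hA
          have hterm : ∀ i : Fin t,
              L (r k) i * U i x - L' (r k) i * U' i x
                = if i = k then U k x - U' k x else 0 := by
            intro i
            rcases lt_trichotomy i k with hlt | heq | hgt
            · rw [(ih' i hlt).2 (r k), (ih' i hlt).1 x, if_neg hlt.ne, sub_self]
            · subst heq; rw [(hL i).1, (hL' i).1, if_pos rfl]; ring
            · rw [(hL i).2 (r k) (hr hgt), (hL' i).2 (r k) (hr hgt),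
                if_neg hgt.ne']; ring
          have hs : ∑ i : Fin t, (L (r k) i * U i x - L' (r k) i * U' i x)
              = U k x - U' k x := by
            rw [Finset.sum_congr rfl (fun i _ => hterm i)]
            simp
          rw [Finset.sum_sub_distrib, hA, sub_self] at hs
          exact sub_eq_zero.mp hs.symm
        have hcol : ∀ x, L x k = L' x k := by
          intro x
          have hA := congrFun (congrFun h x) (c k)
          simp only [Matrix.mul_apply] at hA
          have hterm : ∀ i : Fin t,
              L x i * U i (c k) - L' x i * U' i (c k)
                = if i = k then (L x k - L' x k) * U k (c k) else 0 := by
            intro i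
            rcases lt_trichotomy i k with hlt | heq | hgt
            · rw [(ih' i hlt).2 x, (ih' i hlt).1 (c k), if_neg hlt.ne, sub_self]
            · subst heq; rw [← hrow (c i), if_pos rfl]; ring
            · rw [(hU i).2 (c k) (hc hgt), (hU' i).2 (c k) (hc hgt),
                if_neg hgt.ne']; ring
          have hs : ∑ i : Fin t, (L x i * U i (c k) - L' x i * U' i (c k))
              = (L x k - L' x k) * U k (c k) := by
            rw [Finset.sum_congr rfl (fun i _ => hterm i)]
            simp
          rw [Finset.sum_sub_distrib, hA, sub_self] at hs
          have := mul_eq_zero.mp hs.symm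
          rcases this with h0 | h0
          · exact sub_eq_zero.mp h0
          · exact absurd h0 (hU k).1
        exact ⟨hrow, hcol⟩
  constructor
  · ext x k; exact (key t k k.isLt).2 x
  · ext k x; exact (key t k k.isLt).1 x
end

section
/- Sylvester's identity: let A be an n×n matrix over a commutative ring and m < n. Define the (n−m)×(n−m) matrix B by b_{ij} = [1,...,m,m+i | 1,...,m,m+j]_A. Then det(B) = det(A) · ([1,...,m | 1,...,m]_A)^{n−m−1}. -/
/-!
Both sides are integer polynomials in the entries of `A`, so it suffices to treat the generic
matrix, whose leading block `P` is invertible over the fraction field. Writing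
`A = [[P, Q], [C, D]]`, Schur's formula applied to each bordered `(m+1) × (m+1)` submatrix gives
`B = det P • (D - C P⁻¹ Q)`, hence `det B = (det P) ^ (n-m) * det (D - C P⁻¹ Q)`, while
`det A = det P * det (D - C P⁻¹ Q)`.
-/

open Matrix

namespace Matrix

variable {m n R : Type*} [Fintype m] [DecidableEq m] [CommRing R]

theorem det_submatrix_snoc {ι : Type*} {k : ℕ} (A : Matrix ι ι R) (f g : Fin k → ι) (a b : ι) :
    (A.submatrix (Fin.snoc f a) (Fin.snoc g b)).det =
      (A.submatrix (Sum.elim f fun _ : Unit => a) (Sum.elim g fun _ : Unit => b)).det := by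
  let σ : Fin k ⊕ Unit ≃ Fin (k + 1) :=
    (Equiv.sumCongr (Equiv.refl _) (Equiv.equivPUnit (Fin 1)).symm).trans finSumFinEquiv
  have hσ (c : ι) (h : Fin k → ι) : Fin.snoc h c ∘ σ = Sum.elim h fun _ => c := by
    ext (x | x)
    exacts [Fin.snoc_castSucc .., Fin.snoc_last ..]
  rw [← det_submatrix_equiv_self σ, submatrix_submatrix, hσ, hσ]

/-- `M.borderedMinors i j` is the minor `[1,…,m,m+i | 1,…,m,m+j]` of the block matrix `M`. -/
def borderedMinors (M : Matrix (m ⊕ n) (m ⊕ n) R) : Matrix n n R :=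
  of fun i j => (M.submatrix (Sum.map id fun _ : Unit => i) (Sum.map id fun _ : Unit => j)).det

theorem borderedMinors_eq_det_smul_schur (M : Matrix (m ⊕ n) (m ⊕ n) R)
    [Invertible M.toBlocks₁₁] :
    M.borderedMinors =
      M.toBlocks₁₁.det • (M.toBlocks₂₂ - M.toBlocks₂₁ * ⅟M.toBlocks₁₁ * M.toBlocks₁₂) := by
  ext i j
  have hblocks : M.submatrix (Sum.map id fun _ : Unit => i) (Sum.map id fun _ : Unit => j) =
      fromBlocks M.toBlocks₁₁ (M.toBlocks₁₂.submatrix id fun _ => j)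
        (M.toBlocks₂₁.submatrix (fun _ => i) id) (of fun _ _ => M.toBlocks₂₂ i j) := by
    ext (a | a) (b | b) <;> rfl
  simp [borderedMinors, hblocks, det_fromBlocks₁₁, det_unique, mul_apply]

theorem det_toBlocks₁₁_mvPolynomialX_ne_zero [Nontrivial R] :
    (mvPolynomialX (m ⊕ n) (m ⊕ n) R).toBlocks₁₁.det ≠ 0 := by
  have hrename : (mvPolynomialX (m ⊕ n) (m ⊕ n) R).toBlocks₁₁ =
      (MvPolynomial.rename (Prod.map Sum.inl Sum.inl)).toRingHom.mapMatrix
        (mvPolynomialX m m R) := by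
    ext i j
    simp [toBlocks₁₁]
  rw [hrename, ← RingHom.map_det, AlgHom.toRingHom_eq_coe, RingHom.coe_coe,
    map_ne_zero_iff _ (MvPolynomial.rename_injective _
      (Sum.inl_injective.prodMap Sum.inl_injective))]
  exact det_mvPolynomialX_ne_zero m R

variable [Fintype n] [DecidableEq n]

theorem borderedMinors_mapMatrix {S : Type*} [CommRing S] (f : R →+* S)
    (M : Matrix (m ⊕ n) (m ⊕ n) R) :
    (f.mapMatrix M).borderedMinors = f.mapMatrix M.borderedMinors := by
  ext i j
  simp [borderedMinors, RingHom.map_det, submatrix_map]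

theorem det_borderedMinors_of_invertible [Nonempty n] (M : Matrix (m ⊕ n) (m ⊕ n) R)
    [Invertible M.toBlocks₁₁] :
    M.borderedMinors.det = M.det * M.toBlocks₁₁.det ^ (Fintype.card n - 1) := by
  have hM : M.det = M.toBlocks₁₁.det *
      (M.toBlocks₂₂ - M.toBlocks₂₁ * ⅟M.toBlocks₁₁ * M.toBlocks₁₂).det := by
    conv_lhs => rw [← M.fromBlocks_toBlocks]
    exact det_fromBlocks₁₁ ..
  have hcard : Fintype.card n = Fintype.card n - 1 + 1 :=
    (Nat.sub_add_cancel Fintype.card_pos).symm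
  rw [borderedMinors_eq_det_smul_schur, det_smul, hM, hcard, pow_succ, Nat.add_sub_cancel]
  ring

theorem det_borderedMinors [Nonempty n] (M : Matrix (m ⊕ n) (m ⊕ n) R) :
    M.borderedMinors.det = M.det * M.toBlocks₁₁.det ^ (Fintype.card n - 1) := by
  let X := mvPolynomialX (m ⊕ n) (m ⊕ n) ℤ
  suffices hX : X.borderedMinors.det = X.det * X.toBlocks₁₁.det ^ (Fintype.card n - 1) by
    let φ := MvPolynomial.eval₂Hom (Int.castRingHom R) fun p : (m ⊕ n) × (m ⊕ n) => M p.1 p.2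
    have hφ : φ.mapMatrix X = M := mvPolynomialX_map_eval₂ _ M
    rw [← hφ, borderedMinors_mapMatrix, ← RingHom.map_det, hX, map_mul, map_pow,
      RingHom.map_det, RingHom.map_det]
    rfl
  let K := FractionRing (MvPolynomial ((m ⊕ n) × (m ⊕ n)) ℤ)
  let ι := algebraMap (MvPolynomial ((m ⊕ n) × (m ⊕ n)) ℤ) K
  have hunit : IsUnit (ι.mapMatrix X).toBlocks₁₁.det := by
    refine isUnit_iff_ne_zero.2 ?_
    rw [show (ι.mapMatrix X).toBlocks₁₁ = ι.mapMatrix X.toBlocks₁₁ from rfl, ← RingHom.map_det,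
      map_ne_zero_iff _ (IsFractionRing.injective _ K)]
    exact det_toBlocks₁₁_mvPolynomialX_ne_zero
  let _ := invertibleOfIsUnitDet _ hunit
  apply IsFractionRing.injective _ K
  rw [map_mul, map_pow, RingHom.map_det, RingHom.map_det, RingHom.map_det,
    ← borderedMinors_mapMatrix]
  exact det_borderedMinors_of_invertible (ι.mapMatrix X)

end Matrix

theorem sylvester_identity {R : Type} [CommRing R] {n m : ℕ} (hm : m < n)
    (A : Matrix (Fin n) (Fin n) R)
    (B : Matrix (Fin (n - m)) (Fin (n - m)) R)
    (hB : ∀ i j, B i j =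
      (A.submatrix
        (Fin.snoc (fun k : Fin m => Fin.castLE hm.le k)
          (⟨m + i.val, by have := i.isLt; omega⟩ : Fin n))
        (Fin.snoc (fun k : Fin m => Fin.castLE hm.le k)
          (⟨m + j.val, by have := j.isLt; omega⟩ : Fin n))).det) :
    B.det = A.det * ((A.submatrix (Fin.castLE hm.le) (Fin.castLE hm.le)).det) ^ (n - m - 1) := by
  let e : Fin m ⊕ Fin (n - m) ≃ Fin n := finSumFinEquiv.trans (finCongr (by omega))
  have he_inl (k : Fin m) : e (Sum.inl k) = Fin.castLE hm.le k := Fin.ext (by simp [e])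
  have he_inr (i : Fin (n - m)) : e (Sum.inr i) = ⟨m + i, by omega⟩ := Fin.ext (by simp [e])
  have : Nonempty (Fin (n - m)) := ⟨⟨0, by omega⟩⟩
  have hB' : B = (A.submatrix e e).borderedMinors := by
    ext i j
    rw [hB, det_submatrix_snoc, borderedMinors, of_apply, submatrix_submatrix]
    congr 2 <;> ext (x | x) <;> simp [he_inl, he_inr]
  have hP : (A.submatrix e e).toBlocks₁₁ = A.submatrix (Fin.castLE hm.le) (Fin.castLE hm.le) := by
    ext k l
    simp [toBlocks₁₁, he_inl]
  rw [hB', det_borderedMinors, det_submatrix_equiv_self, hP, Fintype.card_fin]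
end
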